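/- Let (Ω, ℙ) be a probability space, let m, K, T be positive integers and τ ∈ [0, 1). Let f_t : Ω → ℝ^m and e_t : Ω → ℝ^K (t = 1, …, T) be square-integrable random vectors such that for each t the vector f_t is independent of e_t, and (1/T^{1+τ}) Σ_{t=1}^T E‖f_t‖² ≤ C_f and (1/T) Σ_{t=1}^T E‖e_t‖² ≤ C_e for constants C_f, C_e ≥ 0. Then for every ε > 0, ℙ( ‖ (1/T^{1+τ}) Σ_{t=1}^T f_t e_t′ ‖_F > ε ) ≤ √(C_f · C_e) / (ε · T^{τ/2}). In particular, ‖T^{-(1+τ)} Σ_t f_t e_t′‖_F is bounded in probability at rate T^{-τ/2}. -/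

import Mathlib

open MeasureTheory ProbabilityTheory

/-! The Frobenius norm is subadditive and `‖u v′‖_F ≤ ‖u‖ ‖v‖`, so the normalized sum is dominated
pointwise by `B = T^{-(1+τ)} ∑ₜ ‖fₜ‖ ‖eₜ‖`. Markov's inequality for `B`, followed by Cauchy–Schwarz
in `L²` for each `t` and then over `t`, and the moment conditions bound the probability by
`T^{-(1+τ)} (∑ₜ E‖fₜ‖²)^{1/2} (∑ₜ E‖eₜ‖²)^{1/2} / ε ≤ √(C_f C_e) T^{(1+τ)/2 + 1/2 - (1+τ)} / ε`. -/

section Frobenius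

open scoped Matrix.Norms.Frobenius

variable {α ι κ : Type*} [Fintype α] [Fintype ι] [Fintype κ]

lemma Matrix.frobenius_norm_eq_sqrt (A : Matrix ι κ ℝ) : ‖A‖ = √(∑ i, ∑ j, A i j ^ 2) := by
  simp [Matrix.frobenius_norm_def, Real.sqrt_eq_rpow]

lemma Matrix.frobenius_norm_vecMulVec_le (u : EuclideanSpace ℝ ι) (v : EuclideanSpace ℝ κ) :
    ‖Matrix.vecMulVec u.ofLp v.ofLp‖ ≤ ‖u‖ * ‖v‖ := by
  rw [Matrix.vecMulVec_eq Unit]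
  simpa using Matrix.frobenius_norm_mul (Matrix.replicateCol Unit u.ofLp)
    (Matrix.replicateRow Unit v.ofLp)

lemma sqrt_sum_sq_const_mul_sum_mul_le (c : ℝ) (F : α → EuclideanSpace ℝ ι)
    (E : α → EuclideanSpace ℝ κ) :
    √(∑ j, ∑ l, (c * ∑ t, F t j * E t l) ^ 2) ≤ |c| * ∑ t, ‖F t‖ * ‖E t‖ := by
  have hA : √(∑ j, ∑ l, (c * ∑ t, F t j * E t l) ^ 2)
      = ‖c • ∑ t, Matrix.vecMulVec (F t).ofLp (E t).ofLp‖ := by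
    simp [Matrix.frobenius_norm_eq_sqrt, Matrix.sum_apply, Matrix.vecMulVec_apply]
  rw [hA, norm_smul, Real.norm_eq_abs]
  gcongr
  exact (norm_sum_le _ _).trans (Finset.sum_le_sum fun t _ => Matrix.frobenius_norm_vecMulVec_le _ _)

end Frobenius

section Moments

variable {Ω α E F : Type*} [MeasurableSpace Ω] {μ : Measure Ω} [NormedAddCommGroup E]
  [NormedAddCommGroup F]

lemma integral_norm_mul_norm_le_sqrt_mul_sqrt {f : Ω → E} {g : Ω → F} (hf : MemLp f 2 μ)
    (hg : MemLp g 2 μ) :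
    ∫ ω, ‖f ω‖ * ‖g ω‖ ∂μ ≤ √(∫ ω, ‖f ω‖ ^ 2 ∂μ) * √(∫ ω, ‖g ω‖ ^ 2 ∂μ) := by
  have := integral_mul_le_Lp_mul_Lq_of_nonneg Real.HolderConjugate.two_two
    (.of_forall fun ω => norm_nonneg (f ω)) (.of_forall fun ω => norm_nonneg (g ω))
    (by simpa using hf.norm) (by simpa using hg.norm)
  simpa [Real.sqrt_eq_rpow] using this

lemma integrable_norm_mul_norm {f : Ω → E} {g : Ω → F} (hf : MemLp f 2 μ) (hg : MemLp g 2 μ) :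
    Integrable (fun ω => ‖f ω‖ * ‖g ω‖) μ :=
  hf.norm.integrable_mul hg.norm

lemma integral_sum_norm_mul_norm_le [Fintype α] {f : α → Ω → E} {g : α → Ω → F}
    (hf : ∀ t, MemLp (f t) 2 μ) (hg : ∀ t, MemLp (g t) 2 μ) :
    ∫ ω, ∑ t, ‖f t ω‖ * ‖g t ω‖ ∂μ
      ≤ √(∑ t, ∫ ω, ‖f t ω‖ ^ 2 ∂μ) * √(∑ t, ∫ ω, ‖g t ω‖ ^ 2 ∂μ) := by
  rw [integral_finsetSum _ fun t _ => integrable_norm_mul_norm (hf t) (hg t)]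
  calc _ ≤ ∑ t, √(∫ ω, ‖f t ω‖ ^ 2 ∂μ) * √(∫ ω, ‖g t ω‖ ^ 2 ∂μ) :=
        Finset.sum_le_sum fun t _ => integral_norm_mul_norm_le_sqrt_mul_sqrt (hf t) (hg t)
    _ ≤ _ := Real.sum_sqrt_mul_sqrt_le _ (fun t => integral_nonneg fun ω => by positivity)
        (fun t => integral_nonneg fun ω => by positivity)

end Moments

lemma measureReal_lt_le_integral_div {Ω : Type*} [MeasurableSpace Ω] {μ : Measure Ω}
    [IsFiniteMeasure μ] {X B : Ω → ℝ} (hXB : ∀ ω, X ω ≤ B ω) (hB0 : ∀ ω, 0 ≤ B ω)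
    (hB : Integrable B μ) {ε : ℝ} (hε : 0 < ε) :
    μ.real {ω | ε < X ω} ≤ (∫ ω, B ω ∂μ) / ε := by
  rw [le_div_iff₀' hε]
  calc ε * μ.real {ω | ε < X ω} ≤ ε * μ.real {ω | ε ≤ B ω} := by
        gcongr
        · finiteness
        · exact fun h => h.le.trans (hXB ω)
    _ ≤ ∫ ω, B ω ∂μ := mul_meas_ge_le_integral_of_nonneg (.of_forall hB0) hB ε

lemma one_div_rpow_mul_sqrt_mul_sqrt_le {T τ a b Ca Cb : ℝ} (hT : 0 < T) (hCa : 0 ≤ Ca)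
    (hCb : 0 ≤ Cb) (ha : 1 / T ^ (1 + τ) * a ≤ Ca) (hb : 1 / T * b ≤ Cb) :
    1 / T ^ (1 + τ) * (√a * √b) ≤ √(Ca * Cb) / T ^ (τ / 2) := by
  have hsqrt_a : √a ≤ √Ca * T ^ ((1 + τ) / 2) := calc
    √a ≤ √(Ca * T ^ (1 + τ)) := Real.sqrt_le_sqrt <| by
      rwa [one_div_mul_eq_div, div_le_iff₀ (by positivity)] at ha
    _ = _ := by rw [Real.sqrt_mul hCa, Real.sqrt_eq_rpow (T ^ _), ← Real.rpow_mul hT.le]; ring_nf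
  have hsqrt_b : √b ≤ √Cb * T ^ (1 / 2 : ℝ) := calc
    √b ≤ √(Cb * T) := Real.sqrt_le_sqrt <| by rwa [one_div_mul_eq_div, div_le_iff₀ hT] at hb
    _ = _ := by rw [Real.sqrt_mul hCb, Real.sqrt_eq_rpow T]
  have hpow : T ^ (1 + τ) = T ^ ((1 + τ) / 2) * T ^ (1 / 2 : ℝ) * T ^ (τ / 2) := by
    rw [← Real.rpow_add hT, ← Real.rpow_add hT]; ring_nf
  calc 1 / T ^ (1 + τ) * (√a * √b)
      ≤ 1 / T ^ (1 + τ) * ((√Ca * T ^ ((1 + τ) / 2)) * (√Cb * T ^ (1 / 2 : ℝ))) := by gcongr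
    _ = √(Ca * Cb) / T ^ (τ / 2) := by
      rw [hpow, Real.sqrt_mul hCa]; field_simp

theorem stmt_2_general {Ω : Type*} [MeasurableSpace Ω] (μ : Measure Ω) [IsProbabilityMeasure μ]
    (m K T : ℕ) (hT : 0 < T)
    (τ : ℝ)
    (f : Fin T → Ω → EuclideanSpace ℝ (Fin m))
    (e : Fin T → Ω → EuclideanSpace ℝ (Fin K))
    (hf2 : ∀ t, MemLp (f t) 2 μ)
    (he2 : ∀ t, MemLp (e t) 2 μ)
    (Cf Ce : ℝ) (hCf : 0 ≤ Cf) (hCe : 0 ≤ Ce)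
    (hMf : (1 / (T : ℝ) ^ (1 + τ)) * ∑ t, ∫ ω, ‖f t ω‖ ^ 2 ∂μ ≤ Cf)
    (hMe : (1 / (T : ℝ)) * ∑ t, ∫ ω, ‖e t ω‖ ^ 2 ∂μ ≤ Ce)
    (ε : ℝ) (hε : 0 < ε) :
    (μ {ω | Real.sqrt (∑ j, ∑ l,
        ((1 / (T : ℝ) ^ (1 + τ)) * ∑ t, f t ω j * e t ω l) ^ 2) > ε}).toReal
      ≤ Real.sqrt (Cf * Ce) / (ε * (T : ℝ) ^ (τ / 2)) := by
  set c : ℝ := 1 / (T : ℝ) ^ (1 + τ)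
  have hc : 0 ≤ c := by positivity
  have hB : Integrable (fun ω => c * ∑ t, ‖f t ω‖ * ‖e t ω‖) μ :=
    (integrable_finsetSum _ fun t _ => integrable_norm_mul_norm (hf2 t) (he2 t)).const_mul c
  calc μ.real {ω | ε < √(∑ j, ∑ l, (c * ∑ t, f t ω j * e t ω l) ^ 2)}
      ≤ (∫ ω, c * ∑ t, ‖f t ω‖ * ‖e t ω‖ ∂μ) / ε := by
        refine measureReal_lt_le_integral_div (fun ω => ?_) (fun ω => by positivity) hB hε
        simpa [abs_of_nonneg hc] using sqrt_sum_sq_const_mul_sum_mul_le c (f · ω) (e · ω)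
    _ ≤ c * (√(∑ t, ∫ ω, ‖f t ω‖ ^ 2 ∂μ) * √(∑ t, ∫ ω, ‖e t ω‖ ^ 2 ∂μ)) / ε := by
        rw [integral_const_mul]
        gcongr
        exact integral_sum_norm_mul_norm_le hf2 he2
    _ ≤ √(Cf * Ce) / (T : ℝ) ^ (τ / 2) / ε := by
        gcongr
        exact one_div_rpow_mul_sqrt_mul_sqrt_le (by exact_mod_cast hT) hCf hCe hMf hMe
    _ = _ := by rw [div_div, mul_comm ε]

/-- Lemma A.2: individual-unit analogue of Lemma A.1. -/
theorem stmt_2 {Ω : Type*} [MeasurableSpace Ω] (μ : Measure Ω) [IsProbabilityMeasure μ]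
    (m K T : ℕ) (hm : 0 < m) (hK : 0 < K) (hT : 0 < T)
    (τ : ℝ) (hτ0 : 0 ≤ τ) (hτ1 : τ < 1)
    (f : Fin T → Ω → EuclideanSpace ℝ (Fin m))
    (e : Fin T → Ω → EuclideanSpace ℝ (Fin K))
    (hf2 : ∀ t, MemLp (f t) 2 μ)
    (he2 : ∀ t, MemLp (e t) 2 μ)
    (hindep : ∀ t, IndepFun (f t) (e t) μ)
    (Cf Ce : ℝ) (hCf : 0 ≤ Cf) (hCe : 0 ≤ Ce)
    (hMf : (1 / (T : ℝ) ^ (1 + τ)) * ∑ t, ∫ ω, ‖f t ω‖ ^ 2 ∂μ ≤ Cf)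
    (hMe : (1 / (T : ℝ)) * ∑ t, ∫ ω, ‖e t ω‖ ^ 2 ∂μ ≤ Ce)
    (ε : ℝ) (hε : 0 < ε) :
    (μ {ω | Real.sqrt (∑ j, ∑ l,
        ((1 / (T : ℝ) ^ (1 + τ)) * ∑ t, f t ω j * e t ω l) ^ 2) > ε}).toReal
      ≤ Real.sqrt (Cf * Ce) / (ε * (T : ℝ) ^ (τ / 2)) :=
  stmt_2_general μ m K T hT τ f e hf2 he2 Cf Ce hCf hCe hMf hMe ε hε
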